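/- arXiv:1605.06296 — 8 statements merged into one kernel-verified Lean document; each statement's English description precedes it below -/
import Mathlib

section
/- Let η ∈ [0,1] and let p, p_l, p_r ∈ [0,1] and a ∈ [0,1]. Writing x^η = (1-2η)x + η and G(x) = 2x(1-x), the Gini gain computed on noisy fractions equals (1-2η)² times the noise-free Gini gain: [G(p^η) - a·G(p_l^η) - (1-a)·G(p_r^η)] = (1-2η)²·[G(p) - a·G(p_l) - (1-a)·G(p_r)]. -/
/-! Symmetric label noise maps the Gini impurity affinely: `G(x^η) = (1-2η)² G(x) + 2η(1-η)`.
The offset `2η(1-η)` does not depend on `x`, so it cancels in the gain because the child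
weights `a` and `1 - a` sum to one. -/

theorem gini_flipNoise (η x : ℝ) :
    2 * ((1 - 2*η)*x + η) * (1 - ((1 - 2*η)*x + η)) =
      (1 - 2*η)^2 * (2 * x * (1 - x)) + 2 * η * (1 - η) := by
  ring

theorem gini_noisy_gain_general (η p pl pr a : ℝ)
    (noisy : ℝ → ℝ) (hnoisy : ∀ x, noisy x = (1 - 2*η)*x + η)
    (G : ℝ → ℝ) (hG : ∀ x, G x = 2 * x * (1 - x)) :
    G (noisy p) - a * G (noisy pl) - (1 - a) * G (noisy pr) =
      (1 - 2*η)^2 * (G p - a * G pl - (1 - a) * G pr) := by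
  have hG_noisy : ∀ x, G (noisy x) = (1 - 2*η)^2 * G x + 2 * η * (1 - η) := fun x => by
    rw [hnoisy, hG, hG]
    exact gini_flipNoise η x
  rw [hG_noisy, hG_noisy, hG_noisy]
  ring

/-- The Gini gain computed on noisy fractions equals `(1-2η)²` times the noise-free
Gini gain, where `x^η = (1-2η)x + η` and `G(x) = 2x(1-x)`. -/
theorem gini_noisy_gain (η p pl pr a : ℝ)
    (hη : η ∈ Set.Icc (0:ℝ) 1) (hp : p ∈ Set.Icc (0:ℝ) 1)
    (hpl : pl ∈ Set.Icc (0:ℝ) 1) (hpr : pr ∈ Set.Icc (0:ℝ) 1)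
    (ha : a ∈ Set.Icc (0:ℝ) 1)
    (noisy : ℝ → ℝ) (hnoisy : ∀ x, noisy x = (1 - 2*η)*x + η)
    (G : ℝ → ℝ) (hG : ∀ x, G x = 2 * x * (1 - x)) :
    G (noisy p) - a * G (noisy pl) - (1 - a) * G (noisy pr) =
      (1 - 2*η)^2 * (G p - a * G pl - (1 - a) * G pr) :=
  gini_noisy_gain_general η p pl pr a noisy hnoisy G hG
end

section
/- (Theorem 3, Gini part.) Let η ∈ [0,1] with η ≠ 1/2, let p ∈ [0,1] be the parent positive fraction, and consider two splits f₁ = (a₁, p_{l1}, p_{r1}) and f₂ = (a₂, p_{l2}, p_{r2}) with all entries in [0,1]. Writing x^η = (1-2η)x + η and G(x) = 2x(1-x), the Gini gain of f₁ exceeds that of f₂ on noise-free fractions if and only if the Gini gain of f₁ exceeds that of f₂ on the noisy fractions, i.e. G(p)-a₁G(p_{l1})-(1-a₁)G(p_{r1}) > G(p)-a₂G(p_{l2})-(1-a₂)G(p_{r2}) if and only if G(p^η)-a₁G(p_{l1}^η)-(1-a₁)G(p_{r1}^η) > G(p^η)-a₂G(p_{l2}^η)-(1-a₂)G(p_{r2}^η).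 Hence the maximizers of Gini gain under symmetric label noise coincide with those under noise-free data. -/
/-!
Symmetric label noise acts on the Gini impurity affinely:
`G((1-2η)x + η) = (1-2η)² G(x) + 2η(1-η)`.
The constant term cancels in any split gain because the child weights `a` and `1 - a` sum to one,
so every noisy gain is the noise-free gain times `(1-2η)² > 0`, which preserves their order.
-/

def impurityGain (I : ℝ → ℝ) (p a pl pr : ℝ) : ℝ :=
  I p - a * I pl - (1 - a) * I pr

theorem impurityGain_of_affine {I J : ℝ → ℝ} {k b : ℝ} (hJ : ∀ x, J x = k * I x + b)
    (p a pl pr : ℝ) : impurityGain J p a pl pr = k * impurityGain I p a pl pr := by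
  simp only [impurityGain, hJ]
  ring

theorem gini_symmNoise (η x : ℝ) :
    2 * ((1 - 2 * η) * x + η) * (1 - ((1 - 2 * η) * x + η)) =
      (1 - 2 * η) ^ 2 * (2 * x * (1 - x)) + 2 * η * (1 - η) := by
  ring

theorem impurityGain_lt_iff_of_affine {I J : ℝ → ℝ} {k b : ℝ} (hk : 0 < k)
    (hJ : ∀ x, J x = k * I x + b) (p a₁ pl₁ pr₁ a₂ pl₂ pr₂ : ℝ) :
    impurityGain J p a₂ pl₂ pr₂ < impurityGain J p a₁ pl₁ pr₁ ↔
      impurityGain I p a₂ pl₂ pr₂ < impurityGain I p a₁ pl₁ pr₁ := by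
  simp only [impurityGain_of_affine hJ]
  exact mul_lt_mul_iff_of_pos_left hk

theorem gini_gain_noise_tolerant_general (η p : ℝ)
    (hη2 : η ≠ 1/2)
    (a₁ pl₁ pr₁ a₂ pl₂ pr₂ : ℝ)
    (noisy : ℝ → ℝ) (hnoisy : ∀ x, noisy x = (1 - 2*η)*x + η)
    (G : ℝ → ℝ) (hG : ∀ x, G x = 2 * x * (1 - x)) :
    (G p - a₁ * G pl₁ - (1 - a₁) * G pr₁ > G p - a₂ * G pl₂ - (1 - a₂) * G pr₂) ↔
    (G (noisy p) - a₁ * G (noisy pl₁) - (1 - a₁) * G (noisy pr₁) >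
      G (noisy p) - a₂ * G (noisy pl₂) - (1 - a₂) * G (noisy pr₂)) := by
  have hscale : 0 < (1 - 2 * η) ^ 2 := by
    have : 1 - 2 * η ≠ 0 := by contrapose! hη2; linarith
    positivity
  have hnoisyGini : ∀ x, G (noisy x) = (1 - 2 * η) ^ 2 * G x + 2 * η * (1 - η) := by
    intro x
    rw [hG, hG, hnoisy, gini_symmNoise]
  exact (impurityGain_lt_iff_of_affine hscale hnoisyGini p a₁ pl₁ pr₁ a₂ pl₂ pr₂).symm

/-- Theorem 3 (Gini part): for `η ≠ 1/2`, the Gini gain of split `f₁` exceeds that of `f₂`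
on noise-free fractions iff it does on the noisy fractions `x^η = (1-2η)x + η`. -/
theorem gini_gain_noise_tolerant (η p : ℝ)
    (hη : η ∈ Set.Icc (0:ℝ) 1) (hη2 : η ≠ 1/2) (hp : p ∈ Set.Icc (0:ℝ) 1)
    (a₁ pl₁ pr₁ a₂ pl₂ pr₂ : ℝ)
    (ha₁ : a₁ ∈ Set.Icc (0:ℝ) 1) (hpl₁ : pl₁ ∈ Set.Icc (0:ℝ) 1) (hpr₁ : pr₁ ∈ Set.Icc (0:ℝ) 1)
    (ha₂ : a₂ ∈ Set.Icc (0:ℝ) 1) (hpl₂ : pl₂ ∈ Set.Icc (0:ℝ) 1) (hpr₂ : pr₂ ∈ Set.Icc (0:ℝ) 1)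
    (noisy : ℝ → ℝ) (hnoisy : ∀ x, noisy x = (1 - 2*η)*x + η)
    (G : ℝ → ℝ) (hG : ∀ x, G x = 2 * x * (1 - x)) :
    (G p - a₁ * G pl₁ - (1 - a₁) * G pr₁ > G p - a₂ * G pl₂ - (1 - a₂) * G pr₂) ↔
    (G (noisy p) - a₁ * G (noisy pl₁) - (1 - a₁) * G (noisy pr₁) >
      G (noisy p) - a₂ * G (noisy pl₂) - (1 - a₂) * G (noisy pr₂)) :=
  gini_gain_noise_tolerant_general η p hη2 a₁ pl₁ pr₁ a₂ pl₂ pr₂ noisy hnoisy G hG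
end

section
/- Let η ∈ [0,1] with η < 1/2, and let p, p_l, p_r ∈ [0,1], a ∈ [0,1]. Writing x^η = (1-2η)x + η and G_MC(x) = min{x, 1-x}, the misclassification gain on noisy fractions equals (1-2η) times the noise-free gain: [G_MC(p^η) - a·G_MC(p_l^η) - (1-a)·G_MC(p_r^η)] = (1-2η)·[G_MC(p) - a·G_MC(p_l) - (1-a)·G_MC(p_r)]. -/
theorem min_self_one_sub_affine {K : Type*} [Field K] [LinearOrder K] [IsStrictOrderedRing K]
    {η : K} (hη : 0 ≤ 1 - 2 * η) (x : K) :
    min ((1 - 2 * η) * x + η) (1 - ((1 - 2 * η) * x + η)) = (1 - 2 * η) * min x (1 - x) + η := by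
  rw [show 1 - ((1 - 2 * η) * x + η) = (1 - 2 * η) * (1 - x) + η by ring,
    min_add_add_right, mul_min_of_nonneg _ _ hη]

theorem mc_noisy_gain_general (η p pl pr a : ℝ)
    (hη2 : η < 1/2)
    (noisy : ℝ → ℝ) (hnoisy : ∀ x, noisy x = (1 - 2*η)*x + η)
    (Gmc : ℝ → ℝ) (hGmc : ∀ x, Gmc x = min x (1 - x)) :
    Gmc (noisy p) - a * Gmc (noisy pl) - (1 - a) * Gmc (noisy pr) =
      (1 - 2*η) * (Gmc p - a * Gmc pl - (1 - a) * Gmc pr) := by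
  have gmc_noisy (x : ℝ) : Gmc (noisy x) = (1 - 2*η) * Gmc x + η := by
    rw [hGmc, hGmc, hnoisy, min_self_one_sub_affine (by linarith)]
  rw [gmc_noisy, gmc_noisy, gmc_noisy]
  ring

/-- For `η < 1/2`, the misclassification gain on noisy fractions `x^η = (1-2η)x + η`
equals `(1-2η)` times the noise-free misclassification gain, where
`G_MC(x) = min{x, 1-x}`. -/
theorem mc_noisy_gain (η p pl pr a : ℝ)
    (hη : η ∈ Set.Icc (0:ℝ) 1) (hη2 : η < 1/2) (hp : p ∈ Set.Icc (0:ℝ) 1)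
    (hpl : pl ∈ Set.Icc (0:ℝ) 1) (hpr : pr ∈ Set.Icc (0:ℝ) 1)
    (ha : a ∈ Set.Icc (0:ℝ) 1)
    (noisy : ℝ → ℝ) (hnoisy : ∀ x, noisy x = (1 - 2*η)*x + η)
    (Gmc : ℝ → ℝ) (hGmc : ∀ x, Gmc x = min x (1 - x)) :
    Gmc (noisy p) - a * Gmc (noisy pl) - (1 - a) * Gmc (noisy pr) =
      (1 - 2*η) * (Gmc p - a * Gmc pl - (1 - a) * Gmc pr) :=
  mc_noisy_gain_general η p pl pr a hη2 noisy hnoisy Gmc hGmc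
end

section
/- Let η ∈ [0,1] with η > 1/2, and let p, p_l, p_r ∈ [0,1], a ∈ [0,1]. Writing x^η = (1-2η)x + η and G_MC(x) = min{x, 1-x}, the misclassification gain on noisy fractions equals (2η-1) times the noise-free gain: [G_MC(p^η) - a·G_MC(p_l^η) - (1-a)·G_MC(p_r^η)] = (2η-1)·[G_MC(p) - a·G_MC(p_l) - (1-a)·G_MC(p_r)]. -/
/-! For `η ≥ 1/2` the noise map `x ↦ (1-2η)x + η` has slope `1-2η ≤ 0` and fixes `1/2`, so it
swaps the two arguments of `min x (1-x)` while scaling them by `2η-1` and shifting by `1-η`: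
`G_MC(x^η) = (2η-1) G_MC(x) + (1-η)` for every real `x`. The shift cancels in the gain because
the weights `a` and `1-a` sum to `1`. -/

theorem min_noisy_one_sub_noisy {η : ℝ} (hη : 1 / 2 ≤ η) (x : ℝ) :
    min ((1 - 2 * η) * x + η) (1 - ((1 - 2 * η) * x + η)) =
      (2 * η - 1) * min x (1 - x) + (1 - η) := by
  calc min ((1 - 2 * η) * x + η) (1 - ((1 - 2 * η) * x + η))
      = min ((2 * η - 1) * x + (1 - η)) ((2 * η - 1) * (1 - x) + (1 - η)) := by
        rw [min_comm]; congr 1 <;> ring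
    _ = (2 * η - 1) * min x (1 - x) + (1 - η) := by
        rw [min_add_add_right, mul_min_of_nonneg _ _ (by linarith)]

theorem mc_noisy_gain_highNoise_general (η p pl pr a : ℝ)
    (hη2 : η > 1/2)
    (noisy : ℝ → ℝ) (hnoisy : ∀ x, noisy x = (1 - 2*η)*x + η)
    (Gmc : ℝ → ℝ) (hGmc : ∀ x, Gmc x = min x (1 - x)) :
    Gmc (noisy p) - a * Gmc (noisy pl) - (1 - a) * Gmc (noisy pr) =
      (2*η - 1) * (Gmc p - a * Gmc pl - (1 - a) * Gmc pr) := by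
  have noisy_impurity : ∀ x, Gmc (noisy x) = (2 * η - 1) * Gmc x + (1 - η) := fun x => by
    rw [hGmc, hGmc, hnoisy]
    exact min_noisy_one_sub_noisy hη2.le x
  rw [noisy_impurity, noisy_impurity, noisy_impurity]
  ring

/-- For `η > 1/2`, the misclassification gain on noisy fractions `x^η = (1-2η)x + η`
equals `(2η-1)` times the noise-free misclassification gain, where
`G_MC(x) = min{x, 1-x}`. -/
theorem mc_noisy_gain_highNoise (η p pl pr a : ℝ)
    (hη : η ∈ Set.Icc (0:ℝ) 1) (hη2 : η > 1/2) (hp : p ∈ Set.Icc (0:ℝ) 1)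
    (hpl : pl ∈ Set.Icc (0:ℝ) 1) (hpr : pr ∈ Set.Icc (0:ℝ) 1)
    (ha : a ∈ Set.Icc (0:ℝ) 1)
    (noisy : ℝ → ℝ) (hnoisy : ∀ x, noisy x = (1 - 2*η)*x + η)
    (Gmc : ℝ → ℝ) (hGmc : ∀ x, Gmc x = min x (1 - x)) :
    Gmc (noisy p) - a * Gmc (noisy pl) - (1 - a) * Gmc (noisy pr) =
      (2*η - 1) * (Gmc p - a * Gmc pl - (1 - a) * Gmc pr) :=
  mc_noisy_gain_highNoise_general η p pl pr a hη2 noisy hnoisy Gmc hGmc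
end

section
/- (Theorem 3, misclassification part.) Let η ∈ [0,1] with η ≠ 1/2, let p ∈ [0,1], and consider two splits f₁ = (a₁, p_{l1}, p_{r1}) and f₂ = (a₂, p_{l2}, p_{r2}) with all entries in [0,1]. Writing x^η = (1-2η)x + η and G_MC(x) = min{x, 1-x}, the misclassification gain of f₁ exceeds that of f₂ on noise-free fractions if and only if it does on the noisy fractions: G_MC(p)-a₁G_MC(p_{l1})-(1-a₁)G_MC(p_{r1}) > G_MC(p)-a₂G_MC(p_{l2})-(1-a₂)G_MC(p_{r2}) if and only if G_MC(p^η)-a₁G_MC(p_{l1}^η)-(1-a₁)G_MC(p_{r1}^η) > G_MC(p^η)-a₂G_MC(p_{l2}^η)-(1-a₂)G_MC(p_{r2}^η). -/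
/-!
Write `G x = min x (1 - x) = (1 - |2x - 1|) / 2`. Since `2x^η - 1 = (1 - 2η)(2x - 1)`, noise acts on
the impurity affinely, `G (x^η) = |1 - 2η| G x + G η`. The constant cancels in a gain because the
child weights sum to one, so the noisy gain is the noise-free gain scaled by `|1 - 2η|`, which is
positive for `η ≠ 1/2` and therefore preserves the order of gains.
-/

lemma min_self_one_sub_eq (x : ℝ) : min x (1 - x) = (1 - |2 * x - 1|) / 2 := by
  rcases le_total x (1 - x) with h | h
  · rw [min_eq_left h, abs_of_nonpos (by linarith)]; ring
  · rw [min_eq_right h, abs_of_nonneg (by linarith)]; ring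

lemma min_self_one_sub_noisy (η x : ℝ) :
    min ((1 - 2 * η) * x + η) (1 - ((1 - 2 * η) * x + η)) =
      |1 - 2 * η| * min x (1 - x) + min η (1 - η) := by
  have h : 2 * ((1 - 2 * η) * x + η) - 1 = (1 - 2 * η) * (2 * x - 1) := by ring
  rw [min_self_one_sub_eq, min_self_one_sub_eq, min_self_one_sub_eq, h, abs_mul,
    abs_sub_comm (2 * η) 1]
  ring

def splitGain (G : ℝ → ℝ) (p a pl pr : ℝ) : ℝ := G p - a * G pl - (1 - a) * G pr

lemma splitGain_comp_of_affine {G f : ℝ → ℝ} {k c : ℝ} (hGf : ∀ x, G (f x) = k * G x + c)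
    (p a pl pr : ℝ) : splitGain G (f p) a (f pl) (f pr) = k * splitGain G p a pl pr := by
  simp only [splitGain, hGf]
  ring

lemma splitGain_comp_lt_iff_of_affine {G f : ℝ → ℝ} {k c : ℝ} (hk : 0 < k)
    (hGf : ∀ x, G (f x) = k * G x + c) (p a₁ pl₁ pr₁ a₂ pl₂ pr₂ : ℝ) :
    splitGain G (f p) a₂ (f pl₂) (f pr₂) < splitGain G (f p) a₁ (f pl₁) (f pr₁) ↔
      splitGain G p a₂ pl₂ pr₂ < splitGain G p a₁ pl₁ pr₁ := by
  rw [splitGain_comp_of_affine hGf, splitGain_comp_of_affine hGf, mul_lt_mul_iff_right₀ hk]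

theorem mc_gain_noise_tolerant_general (η p : ℝ)
    (hη2 : η ≠ 1/2)
    (a₁ pl₁ pr₁ a₂ pl₂ pr₂ : ℝ)
    (noisy : ℝ → ℝ) (hnoisy : ∀ x, noisy x = (1 - 2*η)*x + η)
    (Gmc : ℝ → ℝ) (hGmc : ∀ x, Gmc x = min x (1 - x)) :
    (Gmc p - a₁ * Gmc pl₁ - (1 - a₁) * Gmc pr₁ >
      Gmc p - a₂ * Gmc pl₂ - (1 - a₂) * Gmc pr₂) ↔
    (Gmc (noisy p) - a₁ * Gmc (noisy pl₁) - (1 - a₁) * Gmc (noisy pr₁) >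
      Gmc (noisy p) - a₂ * Gmc (noisy pl₂) - (1 - a₂) * Gmc (noisy pr₂)) := by
  have hk : 0 < |1 - 2 * η| := abs_pos.mpr fun h => hη2 (by linarith)
  have hGf : ∀ x, Gmc (noisy x) = |1 - 2 * η| * Gmc x + Gmc η := fun x => by
    simp only [hGmc, hnoisy, min_self_one_sub_noisy]
  exact (splitGain_comp_lt_iff_of_affine hk hGf p a₁ pl₁ pr₁ a₂ pl₂ pr₂).symm

/-- Theorem 3 (misclassification part): for `η ≠ 1/2`, the misclassification gain of
split `f₁` exceeds that of `f₂` on noise-free fractions iff it does on the noisy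
fractions `x^η = (1-2η)x + η`, where `G_MC(x) = min{x, 1-x}`. -/
theorem mc_gain_noise_tolerant (η p : ℝ)
    (hη : η ∈ Set.Icc (0:ℝ) 1) (hη2 : η ≠ 1/2) (hp : p ∈ Set.Icc (0:ℝ) 1)
    (a₁ pl₁ pr₁ a₂ pl₂ pr₂ : ℝ)
    (ha₁ : a₁ ∈ Set.Icc (0:ℝ) 1) (hpl₁ : pl₁ ∈ Set.Icc (0:ℝ) 1) (hpr₁ : pr₁ ∈ Set.Icc (0:ℝ) 1)
    (ha₂ : a₂ ∈ Set.Icc (0:ℝ) 1) (hpl₂ : pl₂ ∈ Set.Icc (0:ℝ) 1) (hpr₂ : pr₂ ∈ Set.Icc (0:ℝ) 1)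
    (noisy : ℝ → ℝ) (hnoisy : ∀ x, noisy x = (1 - 2*η)*x + η)
    (Gmc : ℝ → ℝ) (hGmc : ∀ x, Gmc x = min x (1 - x)) :
    (Gmc p - a₁ * Gmc pl₁ - (1 - a₁) * Gmc pr₁ >
      Gmc p - a₂ * Gmc pl₂ - (1 - a₂) * Gmc pr₂) ↔
    (Gmc (noisy p) - a₁ * Gmc (noisy pl₁) - (1 - a₁) * Gmc (noisy pr₁) >
      Gmc (noisy p) - a₂ * Gmc (noisy pl₂) - (1 - a₂) * Gmc (noisy pr₂)) :=
  mc_gain_noise_tolerant_general η p hη2 a₁ pl₁ pr₁ a₂ pl₂ pr₂ noisy hnoisy Gmc hGmc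
end

section
/- (Theorem 3, twoing part.) Let η ∈ [0,1] with η ≠ 1/2, and consider two splits f₁ = (a₁, p_{l1}, p_{r1}) and f₂ = (a₂, p_{l2}, p_{r2}) with all entries in [0,1]. Writing x^η = (1-2η)x + η, the twoing criterion of f₁ exceeds that of f₂ on noise-free fractions if and only if it does on noisy fractions: a₁(1-a₁)(p_{l1} - p_{r1})² > a₂(1-a₂)(p_{l2} - p_{r2})² if and only if a₁(1-a₁)(p_{l1}^η - p_{r1}^η)² > a₂(1-a₂)(p_{l2}^η - p_{r2}^η)². -/
/-! Symmetric label noise acts on class fractions by the affine map `x ↦ (1 - 2η) x + η`. It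
cancels in the difference `p_l - p_r`, so the noisy twoing criterion of every split is the
noise-free one times the same factor `(1 - 2η)²`, which is positive for `η ≠ 1/2` and hence
preserves the comparison between any two splits. -/

def twoing {R : Type*} [CommRing R] (a pl pr : R) : R := a * (1 - a) * (pl - pr) ^ 2

theorem twoing_affine {R : Type*} [CommRing R] (a pl pr c d : R) :
    twoing a (c * pl + d) (c * pr + d) = c ^ 2 * twoing a pl pr := by
  unfold twoing
  ring

theorem twoing_affine_lt_affine_iff {R : Type*} [CommRing R] [LinearOrder R]
    [IsStrictOrderedRing R] {c : R} (hc : c ≠ 0) (d a₁ pl₁ pr₁ a₂ pl₂ pr₂ : R) :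
    twoing a₁ (c * pl₁ + d) (c * pr₁ + d) < twoing a₂ (c * pl₂ + d) (c * pr₂ + d) ↔
      twoing a₁ pl₁ pr₁ < twoing a₂ pl₂ pr₂ := by
  rw [twoing_affine, twoing_affine, mul_lt_mul_iff_right₀ (sq_pos_of_ne_zero hc)]

theorem twoing_noise_tolerant_general (η : ℝ)
    (hη2 : η ≠ 1/2)
    (a₁ pl₁ pr₁ a₂ pl₂ pr₂ : ℝ)
    (noisy : ℝ → ℝ) (hnoisy : ∀ x, noisy x = (1 - 2*η)*x + η) :
    (a₁ * (1 - a₁) * (pl₁ - pr₁)^2 > a₂ * (1 - a₂) * (pl₂ - pr₂)^2) ↔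
    (a₁ * (1 - a₁) * (noisy pl₁ - noisy pr₁)^2 >
      a₂ * (1 - a₂) * (noisy pl₂ - noisy pr₂)^2) := by
  have hscale : 1 - 2 * η ≠ 0 := fun h => hη2 (by linarith)
  change twoing a₂ pl₂ pr₂ < twoing a₁ pl₁ pr₁ ↔
    twoing a₂ (noisy pl₂) (noisy pr₂) < twoing a₁ (noisy pl₁) (noisy pr₁)
  simp only [hnoisy]
  exact (twoing_affine_lt_affine_iff hscale η a₂ pl₂ pr₂ a₁ pl₁ pr₁).symm

/-- Theorem 3 (twoing part): for `η ≠ 1/2`, the twoing criterion of split `f₁` exceeds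
that of `f₂` on noise-free fractions iff it does on the noisy fractions
`x^η = (1-2η)x + η`. -/
theorem twoing_noise_tolerant (η : ℝ)
    (hη : η ∈ Set.Icc (0:ℝ) 1) (hη2 : η ≠ 1/2)
    (a₁ pl₁ pr₁ a₂ pl₂ pr₂ : ℝ)
    (ha₁ : a₁ ∈ Set.Icc (0:ℝ) 1) (hpl₁ : pl₁ ∈ Set.Icc (0:ℝ) 1) (hpr₁ : pr₁ ∈ Set.Icc (0:ℝ) 1)
    (ha₂ : a₂ ∈ Set.Icc (0:ℝ) 1) (hpl₂ : pl₂ ∈ Set.Icc (0:ℝ) 1) (hpr₂ : pr₂ ∈ Set.Icc (0:ℝ) 1)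
    (noisy : ℝ → ℝ) (hnoisy : ∀ x, noisy x = (1 - 2*η)*x + η) :
    (a₁ * (1 - a₁) * (pl₁ - pr₁)^2 > a₂ * (1 - a₂) * (pl₂ - pr₂)^2) ↔
    (a₁ * (1 - a₁) * (noisy pl₁ - noisy pr₁)^2 >
      a₂ * (1 - a₂) * (noisy pl₂ - noisy pr₂)^2) :=
  twoing_noise_tolerant_general η hη2 a₁ pl₁ pr₁ a₂ pl₂ pr₂ noisy hnoisy
end

section
/- Let n ≥ 1, let y_1, ..., y_n ∈ {+1, -1} be fixed labels with n⁺ = #{i : y_i = +1} > n⁻ = n - n⁺, and set ρ = (n⁺ - n⁻)/n. Let η ∈ [0, 1/2) and let Z_1, ..., Z_n be independent Bernoulli(η) random variables. Define the noisy positive count ñ⁺ = ∑_{i : y_i = +1} (1 - Z_i) + ∑_{i : y_i = -1} Z_i and ñ⁻ = n - ñ⁺. Then Pr[ñ⁺ - ñ⁻ < 0] ≤ exp(-ρ²·n·(1-2η)²/2). -/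
open MeasureTheory ProbabilityTheory Finset

/-! With `X_i = y_i (1 - 2 Z_i) ∈ [-1, 1]`, the voting margin `ñ⁺ - ñ⁻` is `∑ X_i`, whose mean is
`(n⁺ - n⁻)(1 - 2η) = ρn(1 - 2η)`. Majority voting fails only if the sum drops below its mean by
`ρn(1 - 2η)`, which Hoeffding's inequality bounds by `exp(-(ρn(1 - 2η))² / (2n))`. -/

section LabelCounts

variable {ι : Type*} [Fintype ι] (y : ι → ℝ)

lemma sum_eq_two_mul_card_filter_sub_card (hy : ∀ i, y i = 1 ∨ y i = -1) :
    ∑ i, y i = 2 * (#{i | y i = 1} : ℝ) - Fintype.card ι := by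
  rw [natCast_card_filter, mul_sum, Fintype.card_eq_sum_ones, Nat.cast_sum, ← sum_sub_distrib]
  refine sum_congr rfl fun i _ => ?_
  rcases hy i with h | h <;> norm_num [h]

lemma two_mul_noisy_count_sub_card (z : ι → ℝ) (hy : ∀ i, y i = 1 ∨ y i = -1) :
    2 * ((∑ i with y i = 1, (1 - z i)) + ∑ i with y i = -1, z i) - Fintype.card ι =
      ∑ i, y i * (1 - 2 * z i) := by
  rw [sum_filter, sum_filter, ← sum_add_distrib, mul_sum, Fintype.card_eq_sum_ones,
    Nat.cast_sum, ← sum_sub_distrib]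
  refine sum_congr rfl fun i _ => ?_
  rcases hy i with h | h <;> norm_num [h]; ring

end LabelCounts

section

variable {Ω ι : Type*} [MeasurableSpace Ω] {μ : Measure Ω} {η : ℝ}

lemma measureReal_sum_le_sum_integral_sub_le [IsProbabilityMeasure μ] {X : ι → Ω → ℝ}
    (h_indep : iIndepFun X μ) (hm : ∀ i, AEMeasurable (X i) μ) {a b : ℝ}
    (hb : ∀ i, ∀ᵐ ω ∂μ, X i ω ∈ Set.Icc a b)
    (s : Finset ι) {ε : ℝ} (hε : 0 ≤ ε) :
    μ.real {ω | ∑ i ∈ s, X i ω ≤ ∑ i ∈ s, μ[X i] - ε} ≤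
      Real.exp (-ε ^ 2 / (2 * #s * ((b - a) / 2) ^ 2)) := by
  have hsub : ∀ i ∈ s, HasSubgaussianMGF (fun ω => μ[X i] - X i ω) ((‖b - a‖₊ / 2) ^ 2) μ :=
    fun i _ => (hasSubgaussianMGF_of_mem_Icc (hm i) (hb i)).neg.congr
      (ae_of_all _ fun ω => by simp)
  have hindep : iIndepFun (fun i ω => μ[X i] - X i ω) μ :=
    h_indep.comp (fun i x => ∫ ω, X i ω ∂μ - x) fun _ =>
      measurable_const.sub measurable_id
  convert HasSubgaussianMGF.measure_sum_ge_le_of_iIndepFun hindep hsub hε using 3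
  · ext ω
    simp only [sum_sub_distrib]
    constructor <;> intro h <;> linarith
  · simp [mul_assoc, div_pow]

lemma integral_eq_measureReal_of_eq_zero_or_eq_one {Z : Ω → ℝ} (hZ : Measurable Z)
    (hval : ∀ ω, Z ω = 0 ∨ Z ω = 1) : μ[Z] = μ.real {ω | Z ω = 1} := by
  have hZ1 : Z = {ω | Z ω = 1}.indicator 1 := by
    funext ω
    rcases hval ω with h | h <;> simp [Set.indicator, h]
  conv_lhs => rw [hZ1]
  exact integral_indicator_one (hZ (measurableSet_singleton 1))

lemma integral_mul_one_sub_two_mul [IsProbabilityMeasure μ] {Z : Ω → ℝ} (hZ : Measurable Z)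
    (hval : ∀ ω, Z ω = 0 ∨ Z ω = 1) (hprob : μ {ω | Z ω = 1} = ENNReal.ofReal η) (hη : 0 ≤ η)
    (a : ℝ) :
    μ[fun ω => a * (1 - 2 * Z ω)] = a * (1 - 2 * η) := by
  have hZ_int : Integrable Z μ := .of_mem_Icc 0 1 hZ.aemeasurable
    (ae_of_all _ fun ω => by rcases hval ω with h | h <;> simp [h])
  rw [integral_const_mul, integral_sub (integrable_const 1) (hZ_int.const_mul 2),
    integral_const_mul, integral_eq_measureReal_of_eq_zero_or_eq_one hZ hval, measureReal_def,
    hprob, ENNReal.toReal_ofReal hη, integral_const, probReal_univ, one_smul]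

lemma measureReal_sum_mul_one_sub_two_mul_nonpos_le [IsProbabilityMeasure μ] [Fintype ι]
    {Z : ι → Ω → ℝ} (hindep : iIndepFun Z μ) (hZ : ∀ i, Measurable (Z i))
    (hval : ∀ i ω, Z i ω = 0 ∨ Z i ω = 1)
    (hprob : ∀ i, μ {ω | Z i ω = 1} = ENNReal.ofReal η) (hη : 0 ≤ η)
    {y : ι → ℝ} (hy : ∀ i, |y i| ≤ 1) (hmean : 0 ≤ (∑ i, y i) * (1 - 2 * η)) :
    μ.real {ω | ∑ i, y i * (1 - 2 * Z i ω) ≤ 0} ≤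
      Real.exp (-((∑ i, y i) * (1 - 2 * η)) ^ 2 / (2 * Fintype.card ι)) := by
  set X : ι → Ω → ℝ := fun i ω => y i * (1 - 2 * Z i ω)
  have hX_indep : iIndepFun X μ :=
    hindep.comp (fun i z => y i * (1 - 2 * z)) fun i => by fun_prop
  have hX_meas : ∀ i, AEMeasurable (X i) μ := fun i => by
    simp only [X]; exact (hZ i).aemeasurable.const_mul 2 |>.const_sub 1 |>.const_mul (y i)
  have hX_mem : ∀ i ω, X i ω ∈ Set.Icc (-1) 1 := fun i ω => by
    rw [Set.mem_Icc, ← abs_le, abs_mul]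
    rcases hval i ω with h | h <;> norm_num [h, hy i]
  have hX_int : ∑ i, μ[X i] = (∑ i, y i) * (1 - 2 * η) := by
    simp only [X, integral_mul_one_sub_two_mul (hZ _) (hval _) (hprob _) hη, sum_mul]
  have := measureReal_sum_le_sum_integral_sub_le hX_indep hX_meas
    (fun i => ae_of_all _ (hX_mem i)) univ hmean
  rw [hX_int, sub_self, card_univ] at this
  convert this using 2
  norm_num

end

/-- At a leaf with `n` samples whose noise-free labels have positive majority margin
`ρ = (n⁺ - n⁻)/n`, under symmetric label noise of rate `η < 1/2` (i.i.d. Bernoulli(η)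
corruption indicators `Z_i`), majority voting fails (`ñ⁺ < ñ⁻`) with probability at
most `exp(-ρ²n(1-2η)²/2)`. -/
theorem majority_vote_failure_bound {Ω : Type*} [MeasurableSpace Ω]
    (μ : Measure Ω) [IsProbabilityMeasure μ]
    (n : ℕ) (hn : 1 ≤ n) (y : Fin n → ℝ) (hy : ∀ i, y i = 1 ∨ y i = -1)
    (nplus nminus : ℕ)
    (hnp : nplus = (univ.filter fun i => y i = 1).card)
    (hnm : nminus = n - nplus) (hmaj : nminus < nplus)
    (ρ : ℝ) (hρ : ρ = ((nplus : ℝ) - nminus) / n)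
    (η : ℝ) (hη : η ∈ Set.Ico (0:ℝ) (1/2))
    (Z : Fin n → Ω → ℝ) (hZmeas : ∀ i, Measurable (Z i))
    (hZval : ∀ i ω, Z i ω = 0 ∨ Z i ω = 1)
    (hZη : ∀ i, μ {ω | Z i ω = 1} = ENNReal.ofReal η)
    (hindep : iIndepFun Z μ)
    (nplusTilde : Ω → ℝ)
    (hnt : ∀ ω, nplusTilde ω =
      (∑ i ∈ univ.filter fun i => y i = 1, (1 - Z i ω)) +
      (∑ i ∈ univ.filter fun i => y i = -1, Z i ω))
    (nminusTilde : Ω → ℝ) (hnmT : ∀ ω, nminusTilde ω = n - nplusTilde ω) :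
    μ {ω | nplusTilde ω - nminusTilde ω < 0} ≤
      ENNReal.ofReal (Real.exp (-(ρ^2 * n * (1 - 2*η)^2) / 2)) := by
  obtain ⟨hη0, hη2⟩ := hη
  have hnplus_le : nplus ≤ n := hnp ▸ (card_filter_le _ _).trans_eq (card_fin n)
  have hmargin : ∑ i, y i = ρ * n := by
    rw [sum_eq_two_mul_card_filter_sub_card y hy, ← hnp, Fintype.card_fin, hρ,
      div_mul_cancel₀ _ (by positivity), hnm, Nat.cast_sub hnplus_le]
    ring
  have hρ0 : 0 ≤ ρ := hρ ▸ div_nonneg (sub_nonneg.2 (by exact_mod_cast hmaj.le)) n.cast_nonneg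
  have hmean : 0 ≤ ρ * n * (1 - 2 * η) := mul_nonneg (by positivity) (by linarith)
  have hevent : {ω | nplusTilde ω - nminusTilde ω < 0} ⊆
      {ω | ∑ i, y i * (1 - 2 * Z i ω) ≤ 0} := fun ω hω => by
    have := two_mul_noisy_count_sub_card y (Z · ω) hy
    rw [Fintype.card_fin] at this
    simp only [Set.mem_ofPred_eq, hnmT, hnt] at hω ⊢
    linarith
  have hy_abs : ∀ i, |y i| ≤ 1 := fun i => by rcases hy i with h | h <;> simp [h]
  have hbound := measureReal_sum_mul_one_sub_two_mul_nonpos_le hindep hZmeas hZval hZη hη0 hy_abs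
    (hmargin ▸ hmean)
  rw [hmargin, Fintype.card_fin] at hbound
  calc μ {ω | nplusTilde ω - nminusTilde ω < 0}
      ≤ μ {ω | ∑ i, y i * (1 - 2 * Z i ω) ≤ 0} := measure_mono hevent
    _ = ENNReal.ofReal (μ.real {ω | ∑ i, y i * (1 - 2 * Z i ω) ≤ 0}) := (ofReal_measureReal).symm
    _ ≤ ENNReal.ofReal (Real.exp (-(ρ^2 * n * (1 - 2*η)^2) / 2)) := by
      refine ENNReal.ofReal_le_ofReal (hbound.trans_eq ?_)
      congr 1
      field_simp
end

section
/- (Remark 4: entropy gain is not noise-tolerant.) Let H(x) = -x·ln x - (1-x)·ln(1-x) (with 0·ln 0 = 0) and for a split (a, p_l, p_r) at a node with positive fraction p define gain_H = H(p) - a·H(p_l) - (1-a)·H(p_r). Consider the parent fraction p = 3/10 and the two splits f₁ = (a₁, p_{l1}, p_{r1}) = (1/2, 1/10, 1/2) and f₂ = (a₂, p_{l2}, p_{r2}) = (3/10, 1/100, 297/700). Let η = 2/5 and write x^η = (1-2η)x + η. Then gain_H(f₁) computed at (p, p_{l1}, p_{r1}) is strictly less than gain_H(f₂) computed at (p, p_{l2},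 p_{r2}), but gain_H computed at the noisy fractions (p^η, p_{l2}^η, p_{r2}^η) for f₂ is strictly less than gain_H computed at (p^η, p_{l1}^η, p_{r1}^η) for f₁. Hence the split maximizing entropy gain can change under symmetric label noise. -/
/-!
Write a class fraction as x = (1 + u)/2. Then log 2 - H(x) = Σ_{k ≥ 1} u^{2k}/(2k(2k-1)), so the
gain of a split is a·D(u_l) + (1-a)·D(u_r) - D(u_p) for this even series D, and symmetric noise
multiplies every imbalance u = 2x - 1 by 1 - 2η = 1/5. Truncating the series (its tail is dominated
by a geometric series) gives bounds on D sharp enough to decide both comparisons; after the noise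
only the leading term u²/2 matters, and it prefers f₁.
-/

open Real Finset

noncomputable def entropyDeficit (u : ℝ) : ℝ := log 2 - binEntropy ((1 + u) / 2)

lemma entropyDeficit_zero : entropyDeficit 0 = 0 := by
  simp [entropyDeficit]

lemma binEntropy_eq_log_two_sub_entropyDeficit (x : ℝ) :
    binEntropy x = log 2 - entropyDeficit (2 * x - 1) := by
  simp only [entropyDeficit, add_sub_cancel, mul_div_cancel_left₀ x two_ne_zero, sub_sub_cancel]

lemma binEntropy_gain_eq (p a pl pr : ℝ) :
    binEntropy p - a * binEntropy pl - (1 - a) * binEntropy pr =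
      a * entropyDeficit (2 * pl - 1) + (1 - a) * entropyDeficit (2 * pr - 1) -
        entropyDeficit (2 * p - 1) := by
  simp only [binEntropy_eq_log_two_sub_entropyDeficit]
  ring

lemma entropyDeficit_eq_of_abs_lt_one {u : ℝ} (hu : |u| < 1) :
    entropyDeficit u = log (1 - u ^ 2) / 2 + u / 2 * (log (1 + u) - log (1 - u)) := by
  obtain ⟨hlo, hhi⟩ := abs_lt.mp hu
  have h1 : 1 + u ≠ 0 := by linarith
  have h2 : 1 - u ≠ 0 := by linarith
  have hsq : 1 - u ^ 2 = (1 + u) * (1 - u) := by ring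
  rw [entropyDeficit, binEntropy, hsq, log_mul h1 h2,
    show 1 - (1 + u) / 2 = (1 - u) / 2 by ring, inv_div, inv_div,
    log_div two_ne_zero h1, log_div two_ne_zero h2]
  ring

lemma hasSum_entropyDeficit {u : ℝ} (hu : |u| < 1) :
    HasSum (fun k : ℕ => (u ^ 2) ^ (k + 1) / ((2 * k + 1) * (2 * k + 2))) (entropyDeficit u) := by
  have hu2 : |u ^ 2| < 1 := by
    rw [abs_pow]; exact pow_lt_one₀ (abs_nonneg u) hu two_ne_zero
  have hlog := (hasSum_pow_div_log_of_abs_lt_one hu2).div_const (-2)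
  have hartanh := (hasSum_log_sub_log_of_abs_lt_one hu).mul_left (u / 2)
  rw [entropyDeficit_eq_of_abs_lt_one hu, ← neg_div_neg_eq]
  refine (hlog.add hartanh).congr_fun fun k => ?_
  field_simp
  ring

lemma sum_le_entropyDeficit {u : ℝ} (hu : |u| < 1) (N : ℕ) :
    ∑ k ∈ range N, (u ^ 2) ^ (k + 1) / ((2 * k + 1) * (2 * k + 2)) ≤ entropyDeficit u :=
  sum_le_hasSum _ (fun k _ => by positivity) (hasSum_entropyDeficit hu)

lemma entropyDeficit_le_sum_add {u : ℝ} (hu : |u| < 1) (N : ℕ) :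
    entropyDeficit u ≤ ∑ k ∈ range N, (u ^ 2) ^ (k + 1) / ((2 * k + 1) * (2 * k + 2)) +
      (u ^ 2) ^ (N + 1) / ((2 * N + 1) * (2 * N + 2) * (1 - u ^ 2)) := by
  have hs : u ^ 2 < 1 := (sq_lt_one_iff_abs_lt_one u).mpr hu
  have htail := (hasSum_nat_add_iff' N).mpr (hasSum_entropyDeficit hu)
  have hgeom := (hasSum_geometric_of_lt_one (sq_nonneg u) hs).mul_left
    ((u ^ 2) ^ (N + 1) / ((2 * N + 1) * (2 * N + 2)))
  have hle := hasSum_le (fun k => ?termwise) htail hgeom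
  case termwise =>
    rw [show (u ^ 2) ^ (k + N + 1) = (u ^ 2) ^ (N + 1) * (u ^ 2) ^ k by ring, mul_div_right_comm]
    gcongr <;> omega
  rw [div_mul_eq_div_div, div_eq_mul_inv _ (1 - u ^ 2)]
  linarith

/-- Remark 4: entropy gain is not noise-tolerant. With entropy `H(x) = -x ln x - (1-x) ln(1-x)`
and entropy gain `H(p) - a·H(p_l) - (1-a)·H(p_r)`, for parent fraction `p = 3/10`,
splits `f₁ = (1/2, 1/10, 1/2)` and `f₂ = (3/10, 1/100, 297/700)`, and noise rate
`η = 2/5` (with `x^η = (1-2η)x + η`), the entropy gain of `f₁` is strictly less than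
that of `f₂` on noise-free fractions, but strictly greater on noisy fractions. -/
theorem entropy_gain_not_noise_tolerant
    (H : ℝ → ℝ) (hH : ∀ x, H x = -(x * Real.log x) - (1 - x) * Real.log (1 - x))
    (gain : ℝ → ℝ → ℝ → ℝ → ℝ)
    (hgain : ∀ p a pl pr, gain p a pl pr = H p - a * H pl - (1 - a) * H pr)
    (η : ℝ) (hη : η = 2/5)
    (noisy : ℝ → ℝ) (hnoisy : ∀ x, noisy x = (1 - 2*η)*x + η) :
    gain (3/10) (1/2) (1/10) (1/2) < gain (3/10) (3/10) (1/100) (297/700) ∧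
    gain (noisy (3/10)) (3/10) (noisy (1/100)) (noisy (297/700)) <
      gain (noisy (3/10)) (1/2) (noisy (1/10)) (noisy (1/2)) := by
  have hHb : H = binEntropy := funext fun x => by
    rw [hH, binEntropy, log_inv, log_inv]; ring
  simp only [hgain, hHb, binEntropy_gain_eq, hnoisy, hη]
  norm_num [entropyDeficit_zero]
  constructor
  · have upper := entropyDeficit_le_sum_add (u := -(4 / 5)) (by norm_num [abs_lt]) 3
    have lower₁ := sum_le_entropyDeficit (u := -(49 / 50)) (by norm_num [abs_lt]) 4
    have lower₂ := sum_le_entropyDeficit (u := -(53 / 350)) (by norm_num [abs_lt]) 1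
    norm_num [sum_range_succ] at upper lower₁ lower₂
    linarith
  · have upper₁ := entropyDeficit_le_sum_add (u := -(49 / 250)) (by norm_num [abs_lt]) 1
    have upper₂ := entropyDeficit_le_sum_add (u := -(53 / 1750)) (by norm_num [abs_lt]) 1
    have lower := sum_le_entropyDeficit (u := -(4 / 25)) (by norm_num [abs_lt]) 1
    norm_num [sum_range_succ] at upper₁ upper₂ lower
    linarith
end
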